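/- For M₁ ∈ U'_{2g}(F_ℓ) and M₂ ∈ B_{2g}(F_ℓ) with trace(M₂) = 0, the product M₁M₂ lies in B_{2g}(F_ℓ) and has trace 0. -/

import Mathlib

/-!
Write both factors as `[[A, μ⁻¹AS],[0, μ(Aᵀ)⁻¹]]`. Their product has the same shape, with
`A = A₁A₂`, `μ = μ₁μ₂` and the symmetric matrix `S = μ₁S₂ + μ₂²A₂⁻¹S₁(A₂⁻¹)ᵀ`. For the trace, the
diagonal of a product of upper triangular matrices is the product of the diagonals; since `A₁` has
constant diagonal `λ`, `A₁⁻¹` has constant diagonal `λ⁻¹`, and with `μ₁ = λ²` this gives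
`tr(M₁M₂) = λ tr A₂ + λ²μ₂ λ⁻¹ tr A₂⁻¹ = λ tr M₂`.
-/

open Matrix Polynomial

noncomputable section

/-- The standard symplectic form matrix `J = [[0, I],[-I, 0]]`. -/
def Jmat (ℓ g : ℕ) : Matrix (Fin g ⊕ Fin g) (Fin g ⊕ Fin g) (ZMod ℓ) :=
  fromBlocks 0 1 (-1) 0

/-- The general symplectic group `GSp_{2g}(F_ℓ)` as a set of matrices:
invertible `M` with `Mᵀ J M = μ J` for some unit `μ` (the multiplicator). -/
def GSpSet (ℓ g : ℕ) : Set (Matrix (Fin g ⊕ Fin g) (Fin g ⊕ Fin g) (ZMod ℓ)) :=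
  {M | IsUnit M ∧ ∃ μ : (ZMod ℓ)ˣ, Mᵀ * Jmat ℓ g * M = (μ : ZMod ℓ) • Jmat ℓ g}

/-- `B_{2g}(F_ℓ)`: block matrices `[[A, μ⁻¹AS],[0, μ(Aᵀ)⁻¹]]` with `A` invertible
upper triangular, `μ ∈ F_ℓˣ` and `S` symmetric. -/
def BSet (ℓ g : ℕ) : Set (Matrix (Fin g ⊕ Fin g) (Fin g ⊕ Fin g) (ZMod ℓ)) :=
  {M | ∃ (A S : Matrix (Fin g) (Fin g) (ZMod ℓ)) (μ : (ZMod ℓ)ˣ),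
    A.BlockTriangular id ∧ IsUnit A ∧ S.IsSymm ∧
    M = fromBlocks A (((μ : ZMod ℓ))⁻¹ • (A * S)) 0 ((μ : ZMod ℓ) • (Aᵀ)⁻¹)}

/-- `U_{2g}(F_ℓ)`: block matrices `[[A, AS],[0, (Aᵀ)⁻¹]]` with `A` unipotent
upper triangular and `S` symmetric. -/
def USet (ℓ g : ℕ) : Set (Matrix (Fin g ⊕ Fin g) (Fin g ⊕ Fin g) (ZMod ℓ)) :=
  {M | ∃ (A S : Matrix (Fin g) (Fin g) (ZMod ℓ)),
    A.BlockTriangular id ∧ (∀ i, A i i = 1) ∧ S.IsSymm ∧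
    M = fromBlocks A (A * S) 0 ((Aᵀ)⁻¹)}

/-- `U'_{2g}(F_ℓ)`: block matrices `[[A, μ⁻¹AS],[0, μ(Aᵀ)⁻¹]]` with `A` upper
triangular of constant diagonal `λ ∈ F_ℓˣ`, `μ = λ²`, and `S` symmetric. -/
def U'Set (ℓ g : ℕ) : Set (Matrix (Fin g ⊕ Fin g) (Fin g ⊕ Fin g) (ZMod ℓ)) :=
  {M | ∃ (A S : Matrix (Fin g) (Fin g) (ZMod ℓ)) (lam : (ZMod ℓ)ˣ),
    A.BlockTriangular id ∧ (∀ i, A i i = (lam : ZMod ℓ)) ∧ S.IsSymm ∧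
    M = fromBlocks A ((((lam : ZMod ℓ) ^ 2))⁻¹ • (A * S)) 0
      (((lam : ZMod ℓ) ^ 2) • (Aᵀ)⁻¹)}

/-- `T_{2g}(F_ℓ)`: block diagonal matrices `diag(A, μ(Aᵀ)⁻¹)` with `A` an
invertible diagonal matrix and `μ ∈ F_ℓˣ`. -/
def TSet (ℓ g : ℕ) : Set (Matrix (Fin g ⊕ Fin g) (Fin g ⊕ Fin g) (ZMod ℓ)) :=
  {M | ∃ (d : Fin g → (ZMod ℓ)ˣ) (μ : (ZMod ℓ)ˣ),
    M = fromBlocks (diagonal fun i => (d i : ZMod ℓ)) 0 0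
      ((μ : ZMod ℓ) • diagonal fun i => (((d i)⁻¹ : (ZMod ℓ)ˣ) : ZMod ℓ))}

namespace Matrix

theorem trace_fromBlocks {m n R : Type*} [Fintype m] [Fintype n] [AddCommMonoid R]
    (A : Matrix m m R) (B : Matrix m n R) (C : Matrix n m R) (D : Matrix n n R) :
    (fromBlocks A B C D).trace = A.trace + D.trace := by
  simp [trace, Fintype.sum_sum_type]

theorem IsSymm.mul_mul_transpose {n R : Type*} [Fintype n] [CommSemiring R] {S : Matrix n n R}
    (hS : S.IsSymm) (A : Matrix n n R) : (A * S * Aᵀ).IsSymm := by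
  rw [IsSymm, transpose_mul, transpose_mul, transpose_transpose, hS.eq, Matrix.mul_assoc]

namespace IsUpperTriangular

variable {n : Type*} [Fintype n] [LinearOrder n]

theorem mul_apply_self {R : Type*} [NonUnitalNonAssocSemiring R] {A B : Matrix n n R}
    (hA : A.IsUpperTriangular) (hB : B.IsUpperTriangular) (i : n) :
    (A * B) i i = A i i * B i i := by
  rw [mul_apply]
  refine Finset.sum_eq_single i (fun j _ hji => ?_) (by simp)
  rcases hji.lt_or_gt with h | h
  · rw [hA h, zero_mul]
  · rw [hB h, mul_zero]

variable {K : Type*} [Field K] {A B : Matrix n n K}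

theorem isUnit_det (hA : A.IsUpperTriangular) (hdiag : ∀ i, A i i ≠ 0) : IsUnit A.det := by
  rw [det_of_isUpperTriangular hA]
  exact (Finset.prod_ne_zero_iff.mpr fun i _ => hdiag i).isUnit

theorem nonsing_inv (hA : A.IsUpperTriangular) : A⁻¹.IsUpperTriangular := by
  by_cases hdet : IsUnit A.det
  · have := A.invertibleOfIsUnitDet hdet
    exact blockTriangular_inv_of_blockTriangular hA
  · rw [nonsing_inv_apply_not_isUnit A hdet]
    exact blockTriangular_zero

theorem inv_apply_self (hA : A.IsUpperTriangular) (hdet : IsUnit A.det) (i : n) :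
    A⁻¹ i i = (A i i)⁻¹ := by
  have h := hA.mul_apply_self hA.nonsing_inv i
  rw [mul_nonsing_inv A hdet, one_apply_eq] at h
  exact eq_inv_of_mul_eq_one_right h.symm

theorem trace_mul_of_apply_self_eq (hA : A.IsUpperTriangular) (hB : B.IsUpperTriangular)
    {c : K} (hc : ∀ i, A i i = c) : (A * B).trace = c * B.trace := by
  simp [trace, hA.mul_apply_self hB, hc, Finset.mul_sum]

end IsUpperTriangular

end Matrix

section Borel

variable {m K : Type*} [Fintype m] [DecidableEq m] [Field K]

def borelMatrix (A S : Matrix m m K) (μ : K) : Matrix (m ⊕ m) (m ⊕ m) K :=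
  fromBlocks A (μ⁻¹ • (A * S)) 0 (μ • (Aᵀ)⁻¹)

theorem borelMatrix_mul {A₁ A₂ S₁ S₂ : Matrix m m K} {μ₁ μ₂ : K} (hA₂ : IsUnit A₂.det)
    (hμ₁ : μ₁ ≠ 0) :
    borelMatrix A₁ S₁ μ₁ * borelMatrix A₂ S₂ μ₂ =
      borelMatrix (A₁ * A₂) (μ₁ • S₂ + μ₂ ^ 2 • (A₂⁻¹ * S₁ * A₂⁻¹ᵀ)) (μ₁ * μ₂) := by
  have hcancel : A₁ * A₂ * A₂⁻¹ = A₁ := by rw [mul_assoc, mul_nonsing_inv A₂ hA₂, mul_one]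
  simp only [borelMatrix, fromBlocks_multiply, transpose_mul, Matrix.mul_inv_rev,
    transpose_nonsing_inv]
  congr 1 <;> simp only [Matrix.mul_zero, Matrix.zero_mul, smul_zero, add_zero, zero_add,
    Matrix.mul_add, Matrix.mul_smul, Matrix.smul_mul, smul_smul, smul_add, ← Matrix.mul_assoc,
    hcancel, mul_comm μ₂ μ₁]
  match_scalars <;> field_simp

theorem trace_borelMatrix (A S : Matrix m m K) (μ : K) :
    (borelMatrix A S μ).trace = A.trace + μ * A⁻¹.trace := by
  rw [borelMatrix, trace_fromBlocks, trace_smul, ← transpose_nonsing_inv, trace_transpose,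
    smul_eq_mul]

end Borel

theorem trace_borelMatrix_mul_of_apply_self_eq {m K : Type*} [Fintype m] [LinearOrder m]
    [Field K] {A₁ A₂ S₁ S₂ : Matrix m m K} {c μ : K} (hA₁ : A₁.IsUpperTriangular)
    (hc : ∀ i, A₁ i i = c) (hc₀ : c ≠ 0) (hA₂ : A₂.IsUpperTriangular) (hdet₂ : IsUnit A₂.det) :
    (borelMatrix A₁ S₁ (c ^ 2) * borelMatrix A₂ S₂ μ).trace = c * (borelMatrix A₂ S₂ μ).trace := by
  have hdet₁ : IsUnit A₁.det := hA₁.isUnit_det fun i => hc i ▸ hc₀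
  have hc' : ∀ i, A₁⁻¹ i i = c⁻¹ := fun i => by rw [hA₁.inv_apply_self hdet₁, hc]
  rw [borelMatrix_mul hdet₂ (pow_ne_zero 2 hc₀), trace_borelMatrix, trace_borelMatrix,
    Matrix.mul_inv_rev, hA₁.trace_mul_of_apply_self_eq hA₂ hc, trace_mul_comm,
    hA₁.nonsing_inv.trace_mul_of_apply_self_eq hA₂.nonsing_inv hc']
  field_simp

section ZModPrime

variable {ℓ g : ℕ} [Fact ℓ.Prime]

theorem mul_mem_BSet {M₁ M₂ : Matrix (Fin g ⊕ Fin g) (Fin g ⊕ Fin g) (ZMod ℓ)}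
    (h₁ : M₁ ∈ BSet ℓ g) (h₂ : M₂ ∈ BSet ℓ g) : M₁ * M₂ ∈ BSet ℓ g := by
  obtain ⟨A₁, S₁, μ₁, hA₁, hU₁, hS₁, rfl⟩ := h₁
  obtain ⟨A₂, S₂, μ₂, hA₂, hU₂, hS₂, rfl⟩ := h₂
  exact ⟨A₁ * A₂, _, μ₁ * μ₂, hA₁.mul hA₂, hU₁.mul hU₂,
    (hS₂.smul _).add ((hS₁.mul_mul_transpose _).smul _),
    borelMatrix_mul ((isUnit_iff_isUnit_det A₂).mp hU₂) μ₁.ne_zero⟩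

theorem U'Set_subset_BSet : U'Set ℓ g ⊆ BSet ℓ g := by
  rintro _ ⟨A, S, lam, hA, hdiag, hS, rfl⟩
  have hdet : IsUnit A.det := IsUpperTriangular.isUnit_det hA fun i => hdiag i ▸ lam.ne_zero
  exact ⟨A, S, lam ^ 2, hA, (isUnit_iff_isUnit_det A).mpr hdet, hS, rfl⟩

end ZModPrime

theorem stmt12_general (ℓ g : ℕ) [Fact ℓ.Prime]
    (M₁ M₂ : Matrix (Fin g ⊕ Fin g) (Fin g ⊕ Fin g) (ZMod ℓ))
    (h₁ : M₁ ∈ U'Set ℓ g) (h₂ : M₂ ∈ BSet ℓ g)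
    (htr : Matrix.trace M₂ = 0) :
    M₁ * M₂ ∈ BSet ℓ g ∧ Matrix.trace (M₁ * M₂) = 0 := by
  refine ⟨mul_mem_BSet (U'Set_subset_BSet h₁) h₂, ?_⟩
  obtain ⟨A₁, S₁, lam, hA₁, hdiag, -, rfl⟩ := h₁
  obtain ⟨A₂, S₂, μ, hA₂, hU₂, -, rfl⟩ := h₂
  rw [← mul_zero (lam : ZMod ℓ), ← htr]
  exact trace_borelMatrix_mul_of_apply_self_eq hA₁ hdiag lam.ne_zero hA₂
    ((isUnit_iff_isUnit_det A₂).mp hU₂)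

/-- For `M₁ ∈ U'_{2g}(F_ℓ)` and `M₂ ∈ B_{2g}(F_ℓ)` with `trace M₂ = 0`,
the product `M₁M₂` lies in `B_{2g}(F_ℓ)` and has trace `0`. -/
theorem stmt12 (ℓ g : ℕ) [Fact ℓ.Prime] (hg : 1 ≤ g)
    (M₁ M₂ : Matrix (Fin g ⊕ Fin g) (Fin g ⊕ Fin g) (ZMod ℓ))
    (h₁ : M₁ ∈ U'Set ℓ g) (h₂ : M₂ ∈ BSet ℓ g)
    (htr : Matrix.trace M₂ = 0) :
    M₁ * M₂ ∈ BSet ℓ g ∧ Matrix.trace (M₁ * M₂) = 0 :=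
  stmt12_general ℓ g M₁ M₂ h₁ h₂ htr
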